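/- For all natural numbers a ≠ b, the integral ∫_0^∞ e^{-x} L_a(x) L_b(x) dx equals 0, where L_a is the simple Laguerre polynomial of degree a. -/

import Mathlib

/-- The simple Laguerre polynomial `L_a(x) = ∑_{α=0}^{a} (-1)^α C(a,α) x^α / α!`. -/
noncomputable def laguerre (a : ℕ) (x : ℝ) : ℝ :=
  ∑ α ∈ Finset.range (a + 1), (-1 : ℝ) ^ α * (Nat.choose a α : ℝ) * x ^ α / (Nat.factorial α : ℝ)

/-!
Write `L_a(x) = ∑ c_α x^α`. Since `∫₀^∞ e^{-x} x^n dx = n!`, for `a < b` the integral equals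
`∑_{α ≤ a} c_α ∑_{β ≤ b} (-1)^β C(b,β) (α+β)!/β!`. The inner sum is, up to sign, the `b`-th
forward difference at `0` of the polynomial `β ↦ (β+1)⋯(β+α)` of degree `α < b`, hence zero.
-/

open MeasureTheory Polynomial Finset Set Nat

theorem Polynomial.sum_range_neg_one_pow_mul_choose_mul_eval_eq_zero {R : Type*} [CommRing R]
    {P : R[X]} {n : ℕ} (hP : P.natDegree < n) :
    ∑ k ∈ range (n + 1), (-1) ^ k * n.choose k * P.eval (k : R) = 0 := by
  have hΔ := congr_fun (P.fwdDiff_iter_eq_zero_of_degree_lt hP) 0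
  rw [fwdDiff_iter_eq_sum_shift] at hΔ
  calc ∑ k ∈ range (n + 1), (-1) ^ k * n.choose k * P.eval (k : R)
      = (-1) ^ n * ∑ k ∈ range (n + 1),
          ((-1 : ℤ) ^ (n - k) * n.choose k) • P.eval (0 + k • 1 : R) := by
        rw [mul_sum]
        refine sum_congr rfl fun k hk => ?_
        obtain ⟨j, rfl⟩ := Nat.exists_eq_add_of_le (Nat.lt_succ_iff.mp (mem_range.mp hk))
        simp only [Nat.add_sub_cancel_left, zsmul_eq_mul, nsmul_eq_mul, mul_one, zero_add]
        push_cast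
        have hsq : ((-1 : R) ^ j) * (-1) ^ j = 1 := by rw [← mul_pow]; norm_num
        linear_combination (-(-1 : R) ^ k * (k + j).choose k * P.eval (k : R)) * hsq
    _ = 0 := by rw [hΔ, Pi.zero_apply, mul_zero]

theorem integral_exp_neg_mul_pow (n : ℕ) :
    ∫ x in Ioi (0 : ℝ), Real.exp (-x) * x ^ n = n ! := by
  rw [← Real.Gamma_nat_eq_factorial, Real.Gamma_eq_integral (by positivity)]
  refine setIntegral_congr_fun measurableSet_Ioi fun x _ => ?_
  rw [add_sub_cancel_right, Real.rpow_natCast]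

theorem integrableOn_exp_neg_mul_pow (n : ℕ) :
    IntegrableOn (fun x => Real.exp (-x) * x ^ n) (Ioi (0 : ℝ)) := by
  refine (Real.GammaIntegral_convergent (s := n + 1) (by positivity)).congr_fun
    (fun x _ => ?_) measurableSet_Ioi
  simp only [add_sub_cancel_right, Real.rpow_natCast]

noncomputable def laguerreCoeff (a α : ℕ) : ℝ := (-1) ^ α * a.choose α / α !

theorem laguerre_eq_sum_laguerreCoeff_mul_pow (a : ℕ) (x : ℝ) :
    laguerre a x = ∑ α ∈ range (a + 1), laguerreCoeff a α * x ^ α :=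
  sum_congr rfl fun _ _ => by rw [laguerreCoeff]; ring

theorem integral_exp_neg_mul_sum_mul_pow {ι : Type*} (s : Finset ι) (c : ι → ℝ) (n : ι → ℕ) :
    ∫ x in Ioi (0 : ℝ), Real.exp (-x) * ∑ i ∈ s, c i * x ^ n i = ∑ i ∈ s, c i * (n i)! := by
  have hterm : ∀ i x, Real.exp (-x) * (c i * x ^ n i) = c i * (Real.exp (-x) * x ^ n i) :=
    fun _ _ => mul_left_comm _ _ _
  simp_rw [mul_sum, hterm]
  rw [integral_finsetSum _ fun i _ => (integrableOn_exp_neg_mul_pow (n i)).const_mul (c i)]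
  simp_rw [integral_const_mul, integral_exp_neg_mul_pow]

theorem sum_laguerreCoeff_mul_factorial_add_eq_zero {k b : ℕ} (h : k < b) :
    ∑ β ∈ range (b + 1), laguerreCoeff b β * (k + β)! = 0 := by
  set P : ℝ[X] := (ascPochhammer ℝ k).comp (X + C 1)
  have hdeg : P.natDegree = k := by
    rw [natDegree_comp, ascPochhammer_natDegree, natDegree_X_add_C, mul_one]
  have hterm : ∀ β : ℕ, laguerreCoeff b β * (k + β)! = (-1) ^ β * b.choose β * P.eval (β : ℝ) := by
    intro β
    have hasc : P.eval (β : ℝ) = (β + 1).ascFactorial k := by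
      rw [eval_comp, eval_add, eval_X, eval_C, ← Nat.cast_succ,
        ascPochhammer_nat_eq_natCast_ascFactorial]
    rw [hasc, laguerreCoeff, add_comm k, ← factorial_mul_ascFactorial, Nat.cast_mul]
    field_simp
  simp_rw [hterm]
  exact sum_range_neg_one_pow_mul_choose_mul_eval_eq_zero (hdeg ▸ h)

theorem laguerre_orthogonal_of_lt {a b : ℕ} (h : a < b) :
    ∫ x in Ioi (0 : ℝ), Real.exp (-x) * laguerre a x * laguerre b x = 0 := by
  have hprod : ∀ x, Real.exp (-x) * laguerre a x * laguerre b x = Real.exp (-x) *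
      ∑ p ∈ range (a + 1) ×ˢ range (b + 1),
        laguerreCoeff a p.1 * laguerreCoeff b p.2 * x ^ (p.1 + p.2) := by
    intro x
    rw [laguerre_eq_sum_laguerreCoeff_mul_pow, laguerre_eq_sum_laguerreCoeff_mul_pow, mul_assoc,
      sum_mul_sum, ← sum_product']
    congr 1
    exact sum_congr rfl fun _ _ => by ring
  simp_rw [hprod, integral_exp_neg_mul_sum_mul_pow, sum_product, mul_assoc, ← mul_sum]
  refine sum_eq_zero fun α hα => ?_
  rw [sum_laguerreCoeff_mul_factorial_add_eq_zero (by grind), mul_zero]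

theorem laguerre_orthogonal (a b : ℕ) (hab : a ≠ b) :
    ∫ x in Set.Ioi (0 : ℝ), Real.exp (-x) * laguerre a x * laguerre b x = 0 := by
  rcases hab.lt_or_gt with h | h
  · exact laguerre_orthogonal_of_lt h
  · simp_rw [mul_right_comm _ (laguerre a _)]
    exact laguerre_orthogonal_of_lt h
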